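/- Let Γ = (G, σ) be a balanced signed graph on n vertices and let F_k(Γ) be its k-token signed graph for some k with 1 ≤ k ≤ n−1. Then the Laplacian spectrum of Γ is contained in the Laplacian spectrum of F_k(Γ), counting multiplicities: for every real number λ, the multiplicity of λ as a root of the characteristic polynomial of the Laplacian matrix of F_k(Γ) is at least its multiplicity as a root of the characteristic polynomial of the Laplacian matrix of Γ. -/

import Mathlib

open scoped Classical

/-- A signed graph: a simple graph together with a signature assigning a sign `±1`
(an element of `ℤˣ`) to each pair of vertices (only the values on edges are relevant). -/
structure SignedGraph (V : Type*) where
  G : SimpleGraph V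
  sign : V → V → ℤˣ
  sign_symm : ∀ u v, sign u v = sign v u

namespace SignedGraph

variable {V W : Type*}

/-- The sign function, as a function on unordered pairs. -/
def esign (Γ : SignedGraph V) : Sym2 V → ℤˣ :=
  Sym2.lift ⟨Γ.sign, Γ.sign_symm⟩

/-- The sign of a walk: the product of the signs of its edges. -/
def walkSign (Γ : SignedGraph V) {u v : V} (p : Γ.G.Walk u v) : ℤˣ :=
  (p.edges.map Γ.esign).prod

/-- A signed graph is balanced if every cycle is positive. -/
def Balanced (Γ : SignedGraph V) : Prop :=
  ∀ ⦃u : V⦄ (p : Γ.G.Walk u u), p.IsCycle → Γ.walkSign p = 1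

/-- Switching at a vertex subset `U`: reverse the sign of every edge with exactly one
endpoint in `U`. -/
noncomputable def switch (Γ : SignedGraph V) (U : Set V) : SignedGraph V where
  G := Γ.G
  sign u v := (if u ∈ U then (-1 : ℤˣ) else 1) * (if v ∈ U then (-1 : ℤˣ) else 1) * Γ.sign u v
  sign_symm u v := by
    try dsimp only
    rw [Γ.sign_symm u v, mul_comm (if u ∈ U then (-1 : ℤˣ) else 1) (if v ∈ U then (-1 : ℤˣ) else 1)]

/-- Two signed graphs on the same vertex set are "the same signed graph" when they have the
same underlying graph and the same signature on every edge. -/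
def SEq (Γ Γ' : SignedGraph V) : Prop :=
  Γ.G = Γ'.G ∧ ∀ u v, Γ.G.Adj u v → Γ.sign u v = Γ'.sign u v

/-- Switching equivalence of two signed graphs on the same vertex set. -/
def SwitchEquiv (Γ Γ' : SignedGraph V) : Prop :=
  ∃ U : Set V, (Γ.switch U).SEq Γ'

/-- A sign-preserving isomorphism of signed graphs. -/
structure Iso (Γ : SignedGraph V) (Γ' : SignedGraph W) where
  toEquiv : V ≃ W
  adj_iff : ∀ u v, Γ.G.Adj u v ↔ Γ'.G.Adj (toEquiv u) (toEquiv v)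
  sign_eq : ∀ u v, Γ.G.Adj u v → Γ.sign u v = Γ'.sign (toEquiv u) (toEquiv v)

/-- Switching isomorphism: `Γ'` is isomorphic to a switching of `Γ`. -/
def SwitchIso (Γ : SignedGraph V) (Γ' : SignedGraph W) : Prop :=
  ∃ U : Set V, Nonempty ((Γ.switch U).Iso Γ')

/-- The negation of a signed graph: all edge signs reversed. -/
def neg (Γ : SignedGraph V) : SignedGraph V where
  G := Γ.G
  sign u v := -Γ.sign u v
  sign_symm u v := by (try dsimp only); rw [Γ.sign_symm]

variable [DecidableEq V]

/-- The underlying graph of the `k`-token graph: vertices are the `k`-subsets of `V`,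
with `A ~ B` when `A Δ B = {a, b}`, `a ∈ A`, `b ∈ B` and `a ~ b` in `G`. -/
def tokenAdj (G : SimpleGraph V) (k : ℕ) : SimpleGraph {A : Finset V // A.card = k} where
  Adj A B := ∃ a b, a ∈ A.1 ∧ b ∈ B.1 ∧ G.Adj a b ∧ symmDiff A.1 B.1 = {a, b}
  symm := by
    constructor
    rintro A B ⟨a, b, ha, hb, hab, hs⟩
    exact ⟨b, a, hb, ha, hab.symm, by rw [symmDiff_comm, hs, Finset.pair_comm]⟩
  loopless := by
    constructor
    rintro A ⟨a, b, ha, hb, hab, hs⟩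
    rw [symmDiff_self] at hs
    have h : a ∈ ({a, b} : Finset V) := Finset.mem_insert_self a {b}
    rw [← hs] at h
    simp at h

/-- The `k`-token signed graph: the edge obtained by moving a token along `ab`
carries the sign of `ab`. -/
def token (Γ : SignedGraph V) (k : ℕ) : SignedGraph {A : Finset V // A.card = k} where
  G := tokenAdj Γ.G k
  sign A B := ∏ a ∈ A.1 \ B.1, ∏ b ∈ B.1 \ A.1, Γ.sign a b
  sign_symm A B := by
    try dsimp only
    rw [Finset.prod_comm]
    exact Finset.prod_congr rfl fun b _ => Finset.prod_congr rfl fun a _ => Γ.sign_symm a b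

/-- The signed adjacency matrix (over `ℝ`). -/
noncomputable def adjMatrix (Γ : SignedGraph V) [Fintype V] : Matrix V V ℝ :=
  Matrix.of fun u v => if Γ.G.Adj u v then ((Γ.sign u v : ℤ) : ℝ) else 0

/-- The signed Laplacian matrix `L = D - A` (over `ℝ`). -/
noncomputable def lapMatrix (Γ : SignedGraph V) [Fintype V] : Matrix V V ℝ :=
  Matrix.diagonal (fun v => (Γ.G.degree v : ℝ)) - Γ.adjMatrix

/-- The quantity `ℓ_m(Γ)`. -/
noncomputable def ellm (Γ : SignedGraph V) [Fintype V] (m : ℕ) : ℝ :=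
  (∑ r ∈ Finset.range (m + 1),
      ((Γ.G.adjMatrix ℝ ^ r).trace - (Γ.adjMatrix ^ r).trace)) /
  (∑ r ∈ Finset.range (m + 1),
      ((Γ.G.adjMatrix ℝ ^ r).trace + |(Γ.adjMatrix ^ r).trace|))

/-- The unbalance level `ℓ(Γ) = max {ℓ_{n-1}(Γ), ℓ_n(Γ)}`. -/
noncomputable def unbalanceLevel (Γ : SignedGraph V) [Fintype V] : ℝ :=
  max (Γ.ellm (Fintype.card V - 1)) (Γ.ellm (Fintype.card V))

/-- The frustration index: the minimum number of negative edges whose deletion yields a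
balanced signed graph. -/
noncomputable def frustrationIndex (Γ : SignedGraph V) : ℕ :=
  sInf {m : ℕ | ∃ F : Finset (Sym2 V), F.card = m ∧ ↑F ⊆ Γ.G.edgeSet ∧
    (∀ e ∈ F, Γ.esign e = -1) ∧
    Balanced ⟨Γ.G.deleteEdges ↑F, Γ.sign, Γ.sign_symm⟩}

/-- The signed complement of a balanced signed graph, with respect to a switching function
`s` witnessing balance (`A_σ = S A S`): the signed graph on the complement graph with
adjacency matrix `S Ā S`, i.e. with sign `s u * s v` on each complement edge. -/
def scompl (Γ : SignedGraph V) (s : V → ℤˣ) : SignedGraph V where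
  G := Γ.Gᶜ
  sign u v := s u * s v
  sign_symm u v := mul_comm _ _

/-- The real diagonal `±1` matrix associated with `s : V → ℤˣ`. -/
noncomputable def diagS [Fintype V] (s : V → ℤˣ) : Matrix V V ℝ :=
  Matrix.diagonal fun v => ((s v : ℤ) : ℝ)

end SignedGraph

/-- The all-positive signed complete graph on `V`. -/
def allPos (V : Type*) : SignedGraph V := ⟨⊤, fun _ _ => 1, fun _ _ => rfl⟩

/-- The `(n; 1, k)`-binomial matrix. -/
noncomputable def binomB (V : Type*) [Fintype V] [DecidableEq V] (k : ℕ) :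
    Matrix {A : Finset V // A.card = k} V ℝ :=
  Matrix.of fun A v => if v ∈ A.1 then 1 else 0

/-- The `(n; k₁, k₂)`-binomial matrix. -/
noncomputable def binomB2 (V : Type*) [Fintype V] [DecidableEq V] (k₁ k₂ : ℕ) :
    Matrix {A : Finset V // A.card = k₂} {A : Finset V // A.card = k₁} ℝ :=
  Matrix.of fun A X => if X.1 ⊆ A.1 then 1 else 0

/-!
A balanced signed graph has a potential `s : V → {±1}` with `σ(uv) = s(u) s(v)` on every edge,
so its Laplacian is `S L(G) S` with `S = diag(s)`; moving one token changes the potential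
`S_k(A) = ∏_{a ∈ A} s(a)` of a `k`-set by the sign of the edge used, so likewise
`L(F_k(Γ)) = S_k L(F_k(G)) S_k`. For the unsigned graphs, `L(F_k(G)) B = B L(G)` with `B` the
`(n; 1, k)`-binomial matrix: both sides, applied to `x` and evaluated at `A`, are the flow of `x`
along the edges of `G` leaving `A`. Hence `S_k B S` intertwines the two signed Laplacians. It is
injective for `1 ≤ k ≤ n - 1`, so it embeds every generalized eigenspace of `L(Γ)` into the
generalized eigenspace of `L(F_k(Γ))` for the same eigenvalue, and the algebraic multiplicity of
an eigenvalue is the dimension of its generalized eigenspace.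
-/

open Finset Matrix

namespace Matrix

variable {m n : Type*} [Fintype m] [Fintype n] [DecidableEq m] [DecidableEq n]

theorem pow_mul_eq_mul_pow_of_mul_eq_mul {R : Type*} [Semiring R] {M : Matrix m m R}
    {N : Matrix n n R} {B : Matrix m n R} (h : M * B = B * N) (j : ℕ) :
    M ^ j * B = B * N ^ j := by
  induction j with
  | zero => simp
  | succ j ih =>
    rw [pow_succ, Matrix.mul_assoc, h, ← Matrix.mul_assoc, ih, Matrix.mul_assoc, ← pow_succ]

theorem toLin'_sub_smul_one_pow {R : Type*} [CommRing R] (A : Matrix n n R) (μ : R) (j : ℕ) :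
    (A.toLin' - μ • 1) ^ j = ((A - μ • 1) ^ j).toLin' := by
  rw [toLin'_pow, map_sub, map_smul, toLin'_one, Module.End.one_eq_id]

theorem rootMultiplicity_charpoly_le_of_mul_eq_mul {K : Type*} [Field K] {M : Matrix m m K}
    {N : Matrix n n K} {B : Matrix m n K} (hB : Function.Injective B.mulVec) (h : M * B = B * N) (μ : K) :
    N.charpoly.rootMultiplicity μ ≤ M.charpoly.rootMultiplicity μ := by
  rw [← charpoly_toLin' N, ← charpoly_toLin' M, ← LinearMap.finrank_maxGenEigenspace_eq,
    ← LinearMap.finrank_maxGenEigenspace_eq]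
  have hshift : (M - μ • 1) * B = B * (N - μ • 1) := by
    rw [Matrix.sub_mul, Matrix.mul_sub, h, Matrix.smul_mul, Matrix.mul_smul, Matrix.one_mul,
      Matrix.mul_one]
  have hmaps : ∀ x ∈ Module.End.maxGenEigenspace N.toLin' μ,
      B.toLin' x ∈ Module.End.maxGenEigenspace M.toLin' μ := by
    intro x hx
    obtain ⟨j, hj⟩ := (Module.End.mem_maxGenEigenspace _ _ _).mp hx
    refine (Module.End.mem_maxGenEigenspace _ _ _).mpr ⟨j, ?_⟩
    rw [toLin'_sub_smul_one_pow, toLin'_apply] at hj ⊢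
    rw [toLin'_apply, mulVec_mulVec, pow_mul_eq_mul_pow_of_mul_eq_mul hshift j, ← mulVec_mulVec,
      hj, mulVec_zero]
  refine LinearMap.finrank_le_finrank_of_injective (f := B.toLin'.restrict hmaps) ?_
  intro x y hxy
  exact Subtype.ext (hB (congrArg Subtype.val hxy))

end Matrix

namespace Finset

variable {V : Type*} [DecidableEq V] {A : Finset V} {a b : V}

theorem card_insert_erase_of_mem_of_notMem (ha : a ∈ A) (hb : b ∉ A) :
    (insert b (A.erase a)).card = A.card := by
  rw [card_insert_of_notMem (fun h => hb (mem_of_mem_erase h)), card_erase_add_one ha]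

theorem sdiff_insert_erase_of_mem_of_notMem (ha : a ∈ A) (hb : b ∉ A) :
    A \ insert b (A.erase a) = {a} := by
  ext x
  simp only [mem_sdiff, mem_insert, mem_erase, mem_singleton]
  grind

theorem insert_erase_sdiff_of_notMem (hb : b ∉ A) : insert b (A.erase a) \ A = {b} := by
  ext x
  simp only [mem_sdiff, mem_insert, mem_erase, mem_singleton]
  grind

theorem sum_sub_sum_insert_erase {M : Type*} [AddCommGroup M] (f : V → M) (ha : a ∈ A)
    (hb : b ∉ A) : ∑ x ∈ A, f x - ∑ x ∈ insert b (A.erase a), f x = f a - f b := by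
  rw [sum_insert (fun h => hb (mem_of_mem_erase h)), ← add_sum_erase A f ha]
  abel

end Finset

namespace SimpleGraph

variable {V R : Type*} [Fintype V] [DecidableEq V] (G : SimpleGraph V) [DecidableRel G.Adj]
  [Ring R]

theorem lapMatrix_mulVec_apply_eq_sum (v : V) (x : V → R) :
    (G.lapMatrix R *ᵥ x) v = ∑ u ∈ G.neighborFinset v, (x v - x u) := by
  rw [lapMatrix_mulVec_apply, sum_sub_distrib, sum_const, card_neighborFinset_eq_degree,
    nsmul_eq_mul]

/-- The terms of the edges inside `A` cancel in pairs. -/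
theorem sum_lapMatrix_mulVec (A : Finset V) (x : V → R) :
    ∑ a ∈ A, (G.lapMatrix R *ᵥ x) a = ∑ p ∈ G.interedges A Aᶜ, (x p.1 - x p.2) := by
  have hinner : ∑ a ∈ A, ∑ u ∈ A, (if G.Adj a u then x a - x u else 0) = 0 := by
    have hswap : ∑ a ∈ A, ∑ u ∈ A, (if G.Adj a u then x u else 0)
        = ∑ a ∈ A, ∑ u ∈ A, (if G.Adj a u then x a else 0) := by
      rw [sum_comm]
      simp_rw [G.adj_comm]
    calc ∑ a ∈ A, ∑ u ∈ A, (if G.Adj a u then x a - x u else 0)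
        = ∑ a ∈ A, ∑ u ∈ A, (if G.Adj a u then x a else 0)
          - ∑ a ∈ A, ∑ u ∈ A, (if G.Adj a u then x u else 0) := by
          simp_rw [← sum_sub_distrib, ite_sub_ite, sub_zero]
      _ = 0 := by rw [hswap, sub_self]
  simp_rw [lapMatrix_mulVec_apply_eq_sum, neighborFinset_eq_filter, sum_filter,
    ← sum_add_sum_compl A, sum_add_distrib, hinner, zero_add, interedges_def, sum_filter,
    sum_product]

end SimpleGraph

section BinomialMatrix

variable {V : Type*} [Fintype V] [DecidableEq V] {k : ℕ}

theorem binomB_mulVec_apply (x : V → ℝ) (A : {A : Finset V // A.card = k}) :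
    (binomB V k *ᵥ x) A = ∑ v ∈ A.1, x v := by
  simp [binomB, mulVec, dotProduct, sum_ite_mem]

/-- Exchanging one element of a `k`-set shows that a vector in the kernel is constant. -/
theorem binomB_mulVec_injective (hk : 1 ≤ k) (hkV : k < Fintype.card V) :
    Function.Injective (binomB V k).mulVec := by
  refine (injective_iff_map_eq_zero (binomB V k).mulVecLin).mpr fun x hx => ?_
  have hsum (A : Finset V) (hA : A.card = k) : ∑ v ∈ A, x v = 0 := by
    simpa [binomB_mulVec_apply] using congrFun hx ⟨A, hA⟩
  have hconst (u w : V) : x u = x w := by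
    obtain rfl | huw := eq_or_ne u w
    · rfl
    obtain ⟨A, huA, hAw, hA⟩ := exists_subsuperset_card_eq
      (singleton_subset_iff.mpr (mem_erase.mpr ⟨huw, mem_univ u⟩))
      (by simpa using hk) (by simpa [card_erase_of_mem] using Nat.le_sub_one_of_lt hkV)
    have hu : u ∈ A := singleton_subset_iff.mp huA
    have hw : w ∉ A := fun h => by simpa using hAw h
    have hdiff := sum_sub_sum_insert_erase x hu hw
    rw [hsum A hA, hsum _ ((card_insert_erase_of_mem_of_notMem hu hw).trans hA), sub_zero,
      eq_comm, sub_eq_zero] at hdiff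
    exact hdiff
  obtain ⟨A, -, hA⟩ := exists_subset_card_eq (s := univ) hkV.le
  funext v
  have hA0 := hsum A hA
  rw [sum_congr rfl fun w _ => hconst w v, sum_const, hA, nsmul_eq_mul] at hA0
  exact (mul_eq_zero.mp hA0).resolve_left (by positivity)

end BinomialMatrix

namespace SignedGraph

variable {V : Type*}

section Walks

variable (Γ : SignedGraph V)

@[simp] theorem walkSign_nil {u : V} : Γ.walkSign (.nil : Γ.G.Walk u u) = 1 := rfl

@[simp] theorem walkSign_cons {u v w : V} (h : Γ.G.Adj u v) (p : Γ.G.Walk v w) :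
    Γ.walkSign (.cons h p) = Γ.sign u v * Γ.walkSign p := by
  simp [walkSign, esign]

@[simp] theorem walkSign_append {u v w : V} (p : Γ.G.Walk u v) (q : Γ.G.Walk v w) :
    Γ.walkSign (p.append q) = Γ.walkSign p * Γ.walkSign q := by
  simp [walkSign]

@[simp] theorem walkSign_reverse {u v : V} (p : Γ.G.Walk u v) :
    Γ.walkSign p.reverse = Γ.walkSign p := by
  simp [walkSign, List.prod_reverse]

@[simp] theorem walkSign_copy {u v u' v' : V} (p : Γ.G.Walk u v) (hu : u = u') (hv : v = v') :
    Γ.walkSign (p.copy hu hv) = Γ.walkSign p := by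
  subst hu hv
  rfl

end Walks

/-- `s` switches `Γ` to the all-positive signature. -/
def IsPotential (Γ : SignedGraph V) (s : V → ℤˣ) : Prop :=
  ∀ ⦃u v : V⦄, Γ.G.Adj u v → Γ.sign u v = s u * s v

variable {Γ : SignedGraph V}

open SimpleGraph.Walk in
/-- Strong induction on the length: a closed walk whose tail is not a path splits off a shorter
closed subwalk, and one whose tail is a path is a cycle or runs along one edge and back. -/
theorem Balanced.walkSign_eq_one (hbal : Γ.Balanced) {u : V} (p : Γ.G.Walk u u) :
    Γ.walkSign p = 1 := by
  induction hlen : p.length using Nat.strong_induction_on generalizing u p with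
  | _ n ih =>
  cases p with
  | nil => rfl
  | @cons _ v _ h q =>
    by_cases hq : q.IsPath
    · cases q with
      | nil => exact absurd h (Γ.G.loopless.irrefl u)
      | cons h' r =>
        cases r with
        | nil => simp [Γ.sign_symm v u, Int.units_mul_self]
        | cons h'' r =>
          refine hbal _ (isCycle_iff_isPath_tail_and_le_length.mpr ⟨?_, ?_⟩)
          · simpa [SimpleGraph.Walk.tail_cons] using hq
          · simp
    · obtain ⟨x, c, ⟨ru, rv, rfl⟩, hc⟩ :
          ∃ (x : V) (c : Γ.G.Walk x x), c.IsSubwalk q ∧ ¬c.Nil := by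
        simpa [isPath_iff_isSubwalk_imp_nil] using hq
      have hc0 : 0 < c.length := not_nil_iff_lt_length.mp hc
      simp only [length_cons, length_append] at hlen
      have hrest : Γ.walkSign (.cons h (ru.append rv)) = 1 :=
        ih _ (by simp only [length_cons, length_append]; omega) _ rfl
      have hloop : Γ.walkSign c = 1 := ih _ (by omega) _ rfl
      simp only [walkSign_cons, walkSign_append] at hrest ⊢
      rw [hloop, mul_one, hrest]

/-- The potential of `v` is the sign of a walk to `v` from a fixed vertex of its component. -/
theorem Balanced.exists_isPotential (hbal : Γ.Balanced) : ∃ s : V → ℤˣ, Γ.IsPotential s := by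
  have hroot (v : V) : Γ.G.Reachable (Γ.G.connectedComponentMk v).out v :=
    SimpleGraph.ConnectedComponent.exact (Γ.G.connectedComponentMk v).out_eq
  refine ⟨fun v => Γ.walkSign (hroot v).some, fun u v huv => ?_⟩
  have hsame : (Γ.G.connectedComponentMk u).out = (Γ.G.connectedComponentMk v).out := by
    rw [SimpleGraph.ConnectedComponent.connectedComponentMk_eq_of_adj huv]
  have hclosed := hbal.walkSign_eq_one
    (((hroot u).some.copy hsame rfl).append (.cons huv (hroot v).some.reverse))
  rwa [walkSign_append, walkSign_copy, walkSign_cons, walkSign_reverse, mul_left_comm,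
    mul_eq_one_iff_eq_inv, Int.units_inv_eq_self] at hclosed

section Token

variable [DecidableEq V] {G : SimpleGraph V} {k : ℕ}

theorem tokenAdj_adj_iff {A B : {A : Finset V // A.card = k}} :
    (tokenAdj G k).Adj A B ↔ ∃ a ∈ A.1, ∃ b ∉ A.1, G.Adj a b ∧ B.1 = insert b (A.1.erase a) := by
  constructor
  · rintro ⟨a, b, ha, hb, hab, hAB⟩
    have hmem (x : V) : (x ∈ A.1 ∧ x ∉ B.1 ∨ x ∈ B.1 ∧ x ∉ A.1) ↔ x = a ∨ x = b := by
      simpa [mem_symmDiff] using congrArg (x ∈ ·) hAB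
    have hbA : b ∉ A.1 := by grind
    refine ⟨a, ha, b, hbA, hab, ?_⟩
    ext x
    simp only [mem_insert, mem_erase]
    grind [hab.ne]
  · rintro ⟨a, ha, b, hb, hab, hB⟩
    refine ⟨a, b, ha, by simp [hB], hab, ?_⟩
    rw [symmDiff_def, sup_eq_union, hB, sdiff_insert_erase_of_mem_of_notMem ha hb,
      insert_erase_sdiff_of_notMem hb]
    rfl

theorem token_G (Γ : SignedGraph V) (k : ℕ) : (Γ.token k).G = tokenAdj Γ.G k := rfl

theorem IsPotential.token {s : V → ℤˣ} (hs : Γ.IsPotential s) (k : ℕ) :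
    (Γ.token k).IsPotential fun A => ∏ a ∈ A.1, s a := by
  intro A B hAB
  obtain ⟨a, ha, b, hb, hab, hB⟩ := tokenAdj_adj_iff.mp hAB
  change ∏ x ∈ A.1 \ B.1, ∏ y ∈ B.1 \ A.1, Γ.sign x y = (∏ a ∈ A.1, s a) * ∏ b ∈ B.1, s b
  rw [hB, sdiff_insert_erase_of_mem_of_notMem ha hb, insert_erase_sdiff_of_notMem hb,
    prod_singleton, prod_singleton, hs hab, prod_insert (fun h => hb (mem_of_mem_erase h)),
    ← mul_prod_erase A.1 s ha, mul_mul_mul_comm, Int.units_mul_self, mul_one]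

variable [Fintype V]

theorem sum_neighborFinset_tokenAdj {M : Type*} [AddCommMonoid M]
    (A : {A : Finset V // A.card = k}) (f : Finset V → M) :
    ∑ B ∈ (tokenAdj G k).neighborFinset A, f B.1
      = ∑ p ∈ G.interedges A.1 A.1ᶜ, f (insert p.2 (A.1.erase p.1)) := by
  symm
  refine sum_bij (fun p hp => ⟨insert p.2 (A.1.erase p.1), ?_⟩) ?_ ?_ ?_ (fun _ _ => rfl)
  · obtain ⟨ha, hb, -⟩ := G.mem_interedges_iff.mp hp
    rw [card_insert_erase_of_mem_of_notMem ha (mem_compl.mp hb), A.2]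
  · intro p hp
    obtain ⟨ha, hb, hab⟩ := G.mem_interedges_iff.mp hp
    rw [SimpleGraph.mem_neighborFinset, tokenAdj_adj_iff]
    exact ⟨p.1, ha, p.2, mem_compl.mp hb, hab, rfl⟩
  · intro p hp q hq hpq
    obtain ⟨hpa, hpb, -⟩ := G.mem_interedges_iff.mp hp
    obtain ⟨hqa, hqb, -⟩ := G.mem_interedges_iff.mp hq
    rw [mem_compl] at hpb hqb
    have h : insert p.2 (A.1.erase p.1) = insert q.2 (A.1.erase q.1) := congrArg Subtype.val hpq
    have h1 := sdiff_insert_erase_of_mem_of_notMem hpa hpb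
    have h2 := insert_erase_sdiff_of_notMem (a := p.1) hpb
    rw [h, sdiff_insert_erase_of_mem_of_notMem hqa hqb] at h1
    rw [h, insert_erase_sdiff_of_notMem hqb] at h2
    exact Prod.ext (singleton_injective h1).symm (singleton_injective h2).symm
  · intro B hB
    obtain ⟨a, ha, b, hb, hab, hB⟩ :=
      tokenAdj_adj_iff.mp (((tokenAdj G k).mem_neighborFinset _ _).mp hB)
    exact ⟨(a, b), G.mem_interedges_iff.mpr ⟨ha, mem_compl.mpr hb, hab⟩, Subtype.ext hB.symm⟩

theorem lapMatrix_tokenAdj_mul_binomB (G : SimpleGraph V) (k : ℕ) :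
    (tokenAdj G k).lapMatrix ℝ * binomB V k = binomB V k * G.lapMatrix ℝ := by
  refine ext_iff_mulVec.mpr fun x => funext fun A => ?_
  rw [← mulVec_mulVec, ← mulVec_mulVec, SimpleGraph.lapMatrix_mulVec_apply_eq_sum,
    binomB_mulVec_apply, binomB_mulVec_apply, G.sum_lapMatrix_mulVec]
  simp only [binomB_mulVec_apply]
  rw [sum_neighborFinset_tokenAdj A (fun B => ∑ v ∈ A.1, x v - ∑ v ∈ B, x v)]
  refine sum_congr rfl fun p hp => ?_
  obtain ⟨ha, hb, -⟩ := G.mem_interedges_iff.mp hp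
  exact sum_sub_sum_insert_erase x ha (mem_compl.mp hb)

end Token

section Laplacian

variable [Fintype V] [DecidableEq V]

theorem diagS_mul_self (s : V → ℤˣ) : diagS s * diagS s = 1 := by
  simp [diagS, ← Int.cast_mul, ← Units.val_mul, Int.units_mul_self]

theorem diagS_mulVec_injective (s : V → ℤˣ) : Function.Injective (diagS s).mulVec := by
  intro x y h
  simpa [mulVec_mulVec, diagS_mul_self] using congrArg (diagS s *ᵥ ·) h

theorem IsPotential.lapMatrix_eq {s : V → ℤˣ} (hs : Γ.IsPotential s) :
    Γ.lapMatrix = diagS s * Γ.G.lapMatrix ℝ * diagS s := by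
  ext u v
  rw [diagS, mul_diagonal, diagonal_mul]
  by_cases huv : u = v
  · subst huv
    simp [lapMatrix, adjMatrix, SimpleGraph.lapMatrix, SimpleGraph.degMatrix, ← mul_assoc,
      mul_comm _ ((s u : ℤ) : ℝ), ← Int.cast_mul]
  · by_cases hadj : Γ.G.Adj u v
    · simp [lapMatrix, adjMatrix, SimpleGraph.lapMatrix, SimpleGraph.degMatrix, huv, hadj, hs hadj]
    · simp [lapMatrix, adjMatrix, SimpleGraph.lapMatrix, SimpleGraph.degMatrix, huv, hadj]

noncomputable def twistedBinomB (s : V → ℤˣ) (k : ℕ) : Matrix {A : Finset V // A.card = k} V ℝ :=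
  diagS (fun A : {A : Finset V // A.card = k} => ∏ a ∈ A.1, s a) * binomB V k * diagS s

theorem IsPotential.lapMatrix_token_mul_twistedBinomB {s : V → ℤˣ} (hs : Γ.IsPotential s)
    (k : ℕ) : (Γ.token k).lapMatrix * twistedBinomB s k = twistedBinomB s k * Γ.lapMatrix := by
  rw [(hs.token k).lapMatrix_eq, hs.lapMatrix_eq, twistedBinomB, token_G]
  simp only [Matrix.mul_assoc]
  rw [← Matrix.mul_assoc (diagS _) (diagS _), diagS_mul_self, Matrix.one_mul,
    ← Matrix.mul_assoc (diagS s) (diagS s), diagS_mul_self, Matrix.one_mul,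
    ← Matrix.mul_assoc _ (binomB V k), lapMatrix_tokenAdj_mul_binomB, Matrix.mul_assoc]

theorem twistedBinomB_mulVec_injective (s : V → ℤˣ) {k : ℕ} (hk : 1 ≤ k)
    (hkV : k < Fintype.card V) : Function.Injective (twistedBinomB s k).mulVec := by
  have h := (diagS_mulVec_injective fun A : {A : Finset V // A.card = k} => ∏ a ∈ A.1, s a).comp
    ((binomB_mulVec_injective hk hkV).comp (diagS_mulVec_injective s))
  simpa only [twistedBinomB, Function.comp_def, mulVec_mulVec, Matrix.mul_assoc] using h

end Laplacian

end SignedGraph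

/-- the Laplacian spectrum of a balanced signed graph is contained, with
multiplicities, in the Laplacian spectrum of its `k`-token signed graph. -/
theorem lap_spectrum_containment {V : Type*} [Fintype V] [DecidableEq V] (n k : ℕ)
    (hn : Fintype.card V = n) (hk1 : 1 ≤ k) (hk2 : k ≤ n - 1)
    (Γ : SignedGraph V) (hbal : Γ.Balanced) (lam : ℝ) :
    Polynomial.rootMultiplicity lam Γ.lapMatrix.charpoly
      ≤ Polynomial.rootMultiplicity lam (Γ.token k).lapMatrix.charpoly := by
  obtain ⟨s, hs⟩ := hbal.exists_isPotential
  exact Matrix.rootMultiplicity_charpoly_le_of_mul_eq_mul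
    (SignedGraph.twistedBinomB_mulVec_injective s hk1 (by omega))
    (hs.lapMatrix_token_mul_twistedBinomB k) lam
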